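/- Let c₁ < 0, c₄ ∈ ℝ, c₂ ≠ 0, and set c₃ = −8/c₂. Define on the open interval I = (c₁ + c₄, c₄) the functions a(τ) = (c₂/2)·√((c₄ − τ)/(τ − c₁ − c₄)) and b(τ) = (c₁ + c₄ − τ)/c₂ (the square root is well defined since (c₄ − τ)/(τ − c₁ − c₄) > 0 on I). Then a and b are differentiable on I and satisfy the four first-integral relations of the vacuum Kantowski–Sachs system: 8·a(τ)·b(τ)²·a'(τ) = c₁; 4·a(τ)·(2·b(τ)·a'(τ) + a(τ)·b'(τ)) = c₂; 8·b'(τ) = c₃; and 4·a(τ)²·b(τ)·b'(τ) = −τ + c₄, for all τ ∈ I. -/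

import Mathlib

/-!
With `v = τ - c₁ - c₄ > 0` and `s = √((c₄ - τ)/v)` one has `a = c₂ s / 2`, `b = -v / c₂`,
`b' = -1/c₂` and `a' = c₁ c₂ / (4 v² s)`. Each relation then reduces, after clearing
denominators, to `s² v = c₄ - τ`, i.e. to the definition of `s`.
-/

open Set

lemma hasDerivAt_sub_div_sub (c d x : ℝ) (hx : x ≠ d) :
    HasDerivAt (fun t => (c - t) / (t - d)) ((d - c) / (x - d) ^ 2) x := by
  have hnum : HasDerivAt (fun t => c - t) (-1) x := by
    simpa using (hasDerivAt_id x).const_sub c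
  have hden : HasDerivAt (fun t => t - d) 1 x := (hasDerivAt_id x).sub_const d
  exact (hnum.div hden (sub_ne_zero.mpr hx)).congr_deriv (by ring)

lemma hasDerivAt_const_mul_sqrt_sub_div_sub (k c d x : ℝ) (hx : x ∈ Ioo d c) :
    HasDerivAt (fun t => k * √((c - t) / (t - d)))
      (k * ((d - c) / (x - d) ^ 2 / (2 * √((c - x) / (x - d))))) x := by
  have hpos : 0 < (c - x) / (x - d) := div_pos (sub_pos.mpr hx.2) (sub_pos.mpr hx.1)
  exact ((hasDerivAt_sub_div_sub c d x hx.1.ne').sqrt hpos.ne').const_mul k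

lemma hasDerivAt_sub_div_const (c k x : ℝ) :
    HasDerivAt (fun t => (c - t) / k) (-1 / k) x := by
  simpa using ((hasDerivAt_id x).const_sub c).div_const k

theorem kantowski_sachs_first_integrals
    (c₁ c₂ c₃ c₄ : ℝ) (hc₂ : c₂ ≠ 0) (hc₃ : c₃ = -8 / c₂)
    (a b : ℝ → ℝ)
    (ha : ∀ τ : ℝ, a τ = (c₂ / 2) * Real.sqrt ((c₄ - τ) / (τ - c₁ - c₄)))
    (hb : ∀ τ : ℝ, b τ = (c₁ + c₄ - τ) / c₂) :
    (∀ τ ∈ Set.Ioo (c₁ + c₄) c₄, DifferentiableAt ℝ a τ ∧ DifferentiableAt ℝ b τ)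
    ∧ (∀ τ ∈ Set.Ioo (c₁ + c₄) c₄,
        8 * a τ * (b τ) ^ 2 * deriv a τ = c₁
        ∧ 4 * a τ * (2 * b τ * deriv a τ + a τ * deriv b τ) = c₂
        ∧ 8 * deriv b τ = c₃
        ∧ 4 * (a τ) ^ 2 * b τ * deriv b τ = -τ + c₄) := by
  obtain rfl : a = fun t => c₂ / 2 * √((c₄ - t) / (t - (c₁ + c₄))) :=
    funext fun t => by rw [ha, sub_sub]
  obtain rfl : b = fun t => (c₁ + c₄ - t) / c₂ := funext hb
  have hda τ (hτ : τ ∈ Ioo (c₁ + c₄) c₄) := hasDerivAt_const_mul_sqrt_sub_div_sub (c₂ / 2) _ _ τ hτ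
  have hdb τ := hasDerivAt_sub_div_const (c₁ + c₄) c₂ τ
  refine ⟨fun τ hτ => ⟨(hda τ hτ).differentiableAt, (hdb τ).differentiableAt⟩, fun τ hτ => ?_⟩
  rw [(hda τ hτ).deriv, (hdb τ).deriv]
  dsimp only
  have hv : 0 < τ - (c₁ + c₄) := sub_pos.mpr hτ.1
  have hw : 0 < c₄ - τ := sub_pos.mpr hτ.2
  have hs : 0 < √((c₄ - τ) / (τ - (c₁ + c₄))) := Real.sqrt_pos.mpr (div_pos hw hv)
  have hs_sq : √((c₄ - τ) / (τ - (c₁ + c₄))) ^ 2 * (τ - (c₁ + c₄)) = c₄ - τ := by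
    rw [Real.sq_sqrt (div_pos hw hv).le, div_mul_cancel₀ _ hv.ne']
  generalize √((c₄ - τ) / (τ - (c₁ + c₄))) = s at hs hs_sq ⊢
  have hv_ne := hv.ne'
  refine ⟨?_, ?_, by rw [hc₃]; ring, ?_⟩
  · field_simp
    ring
  · field_simp
    linear_combination (-4 * (τ - (c₁ + c₄))) * hs_sq
  · field_simp
    linear_combination 4 * hs_sq
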